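/- Let f : 2^V → ℝ be non-decreasing submodular with f(∅)=0 and curvature κ_f. Suppose A = S₁ ∪ S₂ with S₁ ∩ S₂ = ∅, |S₁| = β, and f({v}) ≥ f({v'}) for every v ∈ S₁ and v' ∈ S₂. Then for any B ⊆ A with |B| ≤ β, f(A \ B) ≥ (1 - κ_f)·f(S₂). -/
import Mathlib

private lemma aux_lower {α : Type*} [DecidableEq α] (V : Finset α) (f : Finset α → ℝ) (κ : ℝ)
    (hempty : f ∅ = 0)
    (hcurv : ∀ v ∈ V, ∀ A B : Finset α, A ⊆ V.erase v → B ⊆ V.erase v →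
      f (insert v A) - f A ≥ (1 - κ) * (f (insert v B) - f B)) :
    ∀ T C : Finset α, T ⊆ V → C ⊆ V → Disjoint T C →
      f (T ∪ C) ≥ f C + (1 - κ) * ∑ v ∈ T, f {v} := by
  intro T
  induction T using Finset.induction_on with
  | empty => intro C _ _ _; simp
  | @insert a s hx ih =>
    intro C hTV hCV hdisj
    have ha : a ∈ V := hTV (Finset.mem_insert_self a s)
    have hs : s ⊆ V := fun x hxs => hTV (Finset.mem_insert_of_mem hxs)
    have hdisj' : Disjoint s C := hdisj.mono_left (Finset.subset_insert a s)
    have haC : a ∉ C := by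
      intro hmem
      exact (Finset.disjoint_left.mp hdisj (Finset.mem_insert_self a s)) hmem
    have hsubV : s ∪ C ⊆ V.erase a := by
      intro x hxm
      rcases Finset.mem_union.mp hxm with h | h
      · exact Finset.mem_erase.mpr ⟨fun he => hx (he ▸ h), hs h⟩
      · exact Finset.mem_erase.mpr ⟨fun he => haC (he ▸ h), hCV h⟩
    have hmarg := hcurv a ha (s ∪ C) ∅ hsubV (Finset.empty_subset _)
    have hins : insert a s ∪ C = insert a (s ∪ C) := by
      simp [Finset.insert_union]
    rw [hins, Finset.sum_insert hx]
    have hie := ih C hs hCV hdisj'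
    have he2 : (insert a (∅:Finset α)) = {a} := rfl
    rw [he2, hempty] at hmarg
    have hd := mul_add (1 - κ) (f {a}) (∑ v ∈ s, f {v})
    linarith [hmarg, hie]

private lemma aux_upper {α : Type*} [DecidableEq α] (V : Finset α) (f : Finset α → ℝ)
    (hempty : f ∅ = 0)
    (hsub : ∀ (A B : Finset α) (v : α), A ⊆ B → B ⊆ V → v ∈ V →
      f (insert v A) - f A ≥ f (insert v B) - f B) :
    ∀ T C : Finset α, T ⊆ V → C ⊆ V →
      f (T ∪ C) ≤ f C + ∑ v ∈ T, f {v} := by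
  intro T
  induction T using Finset.induction_on with
  | empty => intro C _ _; simp
  | @insert a s hx ih =>
    intro C hTV hCV
    have ha : a ∈ V := hTV (Finset.mem_insert_self a s)
    have hs : s ⊆ V := fun x hxs => hTV (Finset.mem_insert_of_mem hxs)
    have hsubV : s ∪ C ⊆ V := Finset.union_subset hs hCV
    have hmarg := hsub ∅ (s ∪ C) a (Finset.empty_subset _) hsubV ha
    have hins : insert a s ∪ C = insert a (s ∪ C) := by
      simp [Finset.insert_union]
    rw [hins, Finset.sum_insert hx]
    have hie := ih C hs hCV
    have he2 : (insert a (∅:Finset α)) = {a} := rfl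
    rw [he2, hempty] at hmarg
    linarith [hmarg, hie]

theorem stmt_9 {α : Type*} [DecidableEq α] (V : Finset α) (f : Finset α → ℝ) (κ : ℝ)
    (hmono : ∀ A B : Finset α, A ⊆ B → B ⊆ V → f A ≤ f B)
    (hempty : f ∅ = 0)
    (hsub : ∀ (A B : Finset α) (v : α), A ⊆ B → B ⊆ V → v ∈ V →
      f (insert v A) - f A ≥ f (insert v B) - f B)
    (hne : ∀ v ∈ V, f {v} ≠ 0)
    (hκ0 : 0 ≤ κ) (hκ1 : κ ≤ 1)
    (hcurv : ∀ v ∈ V, ∀ A B : Finset α, A ⊆ V.erase v → B ⊆ V.erase v →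
      f (insert v A) - f A ≥ (1 - κ) * (f (insert v B) - f B))
    (b : ℕ) (S₁ S₂ A : Finset α) (hAV : A ⊆ V)
    (hApart : A = S₁ ∪ S₂) (hSdisj : Disjoint S₁ S₂)
    (hS₁card : S₁.card = b)
    (hbait : ∀ v ∈ S₁, ∀ v' ∈ S₂, f {v} ≥ f {v'})
    (B : Finset α) (hBA : B ⊆ A) (hBcard : B.card ≤ b) :
    f (A \ B) ≥ (1 - κ) * f S₂ := by
  have hS₁V : S₁ ⊆ V := fun x hxm => hAV (hApart ▸ Finset.mem_union_left _ hxm)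
  have hS₂V : S₂ ⊆ V := fun x hxm => hAV (hApart ▸ Finset.mem_union_right _ hxm)
  -- nonnegativity of singletons
  have hsingnn : ∀ v ∈ V, 0 ≤ f {v} := by
    intro v hv
    have := hmono ∅ {v} (Finset.empty_subset _) (by simpa using hv)
    simpa [hempty] using this
  -- decomposition of A \ B
  have hAB : A \ B = (S₁ \ B) ∪ (S₂ \ B) := by
    rw [hApart, Finset.union_sdiff_distrib]
  -- lower bound on f (A \ B)
  have hdisj₁ : Disjoint (S₁ \ B) (S₂ \ B) :=
    (hSdisj.mono_left (Finset.sdiff_subset)).mono_right Finset.sdiff_subset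
  have hlow := aux_lower V f κ hempty hcurv (S₁ \ B) (S₂ \ B)
    (fun x hxm => hS₁V (Finset.mem_sdiff.mp hxm).1)
    (fun x hxm => hS₂V (Finset.mem_sdiff.mp hxm).1) hdisj₁
  rw [← hAB] at hlow
  -- upper bound on f S₂
  have hS₂dec : (S₂ ∩ B) ∪ (S₂ \ B) = S₂ := by
    ext x; simp only [Finset.mem_union, Finset.mem_inter, Finset.mem_sdiff]; tauto
  have hup := aux_upper V f hempty hsub (S₂ ∩ B) (S₂ \ B)
    (fun x hxm => hS₂V (Finset.mem_inter.mp hxm).1)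
    (fun x hxm => hS₂V (Finset.mem_sdiff.mp hxm).1)
  rw [hS₂dec] at hup
  -- cardinality comparison
  have hBS₁ : B \ S₁ = S₂ ∩ B := by
    ext x
    simp only [Finset.mem_sdiff, Finset.mem_inter]
    constructor
    · rintro ⟨hxB, hxS₁⟩
      have := hBA hxB
      rw [hApart, Finset.mem_union] at this
      exact ⟨this.resolve_left hxS₁, hxB⟩
    · rintro ⟨hxS₂, hxB⟩
      exact ⟨hxB, fun h => (Finset.disjoint_left.mp hSdisj h) hxS₂⟩
  have hc1 : (S₁ ∩ B).card + (S₁ \ B).card = S₁.card := Finset.card_inter_add_card_sdiff _ _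
  have hc2 : (B ∩ S₁).card + (B \ S₁).card = B.card := Finset.card_inter_add_card_sdiff _ _
  have hcomm : B ∩ S₁ = S₁ ∩ B := Finset.inter_comm _ _
  have hcard : (S₂ ∩ B).card ≤ (S₁ \ B).card := by
    rw [← hBS₁]
    rw [hcomm] at hc2
    omega
  -- sum comparison
  have hsumcmp : ∑ v ∈ S₂ ∩ B, f {v} ≤ ∑ v ∈ S₁ \ B, f {v} := by
    rcases Finset.eq_empty_or_nonempty (S₁ \ B) with he | hne'
    · have : (S₂ ∩ B).card = 0 := by rw [he] at hcard; simpa using hcard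
      have h0 : S₂ ∩ B = ∅ := Finset.card_eq_zero.mp this
      rw [h0, he]
    · obtain ⟨v₀, hv₀, hm⟩ := Finset.exists_mem_eq_inf' hne' (fun v => f {v})
      have hv₀S₁ : v₀ ∈ S₁ := (Finset.mem_sdiff.mp hv₀).1
      have hv₀nn : 0 ≤ f {v₀} := hsingnn v₀ (hS₁V hv₀S₁)
      calc ∑ v ∈ S₂ ∩ B, f {v} ≤ ∑ _v ∈ S₂ ∩ B, f {v₀} := by
            apply Finset.sum_le_sum
            intro i hi
            exact hbait v₀ hv₀S₁ i (Finset.mem_inter.mp hi).1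
        _ = (S₂ ∩ B).card * f {v₀} := by rw [Finset.sum_const]; ring
        _ ≤ (S₁ \ B).card * f {v₀} := by
            apply mul_le_mul_of_nonneg_right _ hv₀nn
            exact_mod_cast hcard
        _ = ∑ _v ∈ S₁ \ B, f {v₀} := by rw [Finset.sum_const]; ring
        _ ≤ ∑ v ∈ S₁ \ B, f {v} := by
            apply Finset.sum_le_sum
            intro i hi
            exact hm ▸ Finset.inf'_le _ hi
  -- nonnegativity of f (S₂ \ B)
  have hS₂Bnn : 0 ≤ f (S₂ \ B) := by
    have := hmono ∅ (S₂ \ B) (Finset.empty_subset _)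
      (fun x hxm => hS₂V (Finset.mem_sdiff.mp hxm).1)
    simpa [hempty] using this
  nlinarith [hlow, hup, hsumcmp, hS₂Bnn]
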